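/- Let G be a group, g ∈ G, and define A_1 = ⟨g⟩^G, A_{n+1} = ⟨g⟩^{A_n}, and D_1 = [G,⟨g⟩], D_{n+1} = [D_n,⟨g⟩]. Then for every n ≥ 1, every element of A_n can be written as a product x·y with x ∈ ⟨g⟩ and y ∈ D_n; in particular A_n is contained in the join ⟨g⟩ ⊔ D_n. -/

import Mathlib

/-!
Write `Z = ⟨g⟩`. Each `D n` satisfies `⁅D n, Z⁆ ≤ D n`, so `Z` normalizes `D n` and
`Z ⊔ D n = Z * D n` as sets. If `k = x * y` with `x ∈ Z` and `y ∈ D n`, then for `h ∈ Z` the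
conjugate `k⁻¹ * h * k = y⁻¹ * h * y = ⁅y⁻¹, h⁆ * h` lies in `Z ⊔ ⁅D n, Z⁆`, since `Z` is abelian.
Induction on `n` then gives `A n ≤ Z ⊔ D n`.
-/

/-- Normal closure of `H` in `K` as a subgroup of `G`. -/
def nclIn {G : Type*} [Group G] (H K : Subgroup G) : Subgroup G :=
  Subgroup.closure {x | ∃ h ∈ H, ∃ k ∈ K, x = k⁻¹ * h * k}

open scoped commutatorElement Pointwise

section

variable {G : Type*} [Group G]

theorem conj_mul_eq_commutatorElement_mul_of_commute {h x : G} (hx : Commute h x) (y : G) :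
    (x * y)⁻¹ * h * (x * y) = ⁅y⁻¹, h⁆ * h := by
  have hxh : x⁻¹ * h * x = h := by
    rw [mul_assoc, hx.eq, ← mul_assoc, inv_mul_cancel, one_mul]
  calc (x * y)⁻¹ * h * (x * y) = y⁻¹ * (x⁻¹ * h * x) * y := by group
    _ = ⁅y⁻¹, h⁆ * h := by rw [hxh, commutatorElement_def]; group

namespace Subgroup

theorem nclIn_le_sup_commutator {H K N : Subgroup G} [IsMulCommutative H]
    (hHN : H ≤ normalizer N) (hK : K ≤ H ⊔ N) : nclIn H K ≤ H ⊔ ⁅N, H⁆ := by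
  rw [nclIn, closure_le]
  rintro _ ⟨h, hh, k, hk, rfl⟩
  obtain ⟨x, hx, y, hy, rfl⟩ : k ∈ (H : Set G) * N := by
    rw [← coe_mul_of_left_le_normalizer_right H N hHN]
    exact hK hk
  have hcomm : Commute h x := setLike_mul_comm hh hx
  rw [conj_mul_eq_commutatorElement_mul_of_commute hcomm]
  exact mul_mem (mem_sup_right (commutator_mem_commutator (inv_mem hy) hh)) (mem_sup_left hh)

section IteratedCommutator

variable {H : Subgroup G} {D : ℕ → Subgroup G}

theorem le_normalizer_of_iterated_commutator (hD1 : D 1 = ⁅(⊤ : Subgroup G), H⁆)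
    (hD : ∀ n ≥ 1, D (n + 1) = ⁅D n, H⁆) : ∀ n ≥ 1, H ≤ normalizer (D n) := by
  simp only [le_normalizer_iff_commutator_le_left]
  refine Nat.le_induction ?_ fun n hn ih => ?_
  · rw [hD1]
    exact commutator_mono le_top le_rfl
  · rw [hD n hn]
    exact commutator_mono ih le_rfl

theorem iterated_nclIn_le_sup_iterated_commutator [IsMulCommutative H] {A : ℕ → Subgroup G}
    (hA1 : A 1 = nclIn H ⊤) (hA : ∀ n ≥ 1, A (n + 1) = nclIn H (A n))
    (hD1 : D 1 = ⁅(⊤ : Subgroup G), H⁆) (hD : ∀ n ≥ 1, D (n + 1) = ⁅D n, H⁆) :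
    ∀ n ≥ 1, A n ≤ H ⊔ D n := by
  refine Nat.le_induction ?_ fun n hn ih => ?_
  · rw [hA1, hD1]
    exact nclIn_le_sup_commutator (le_normalizer_iff_commutator_le_left.2 le_top) le_sup_right
  · rw [hA n hn, hD n hn]
    exact nclIn_le_sup_commutator (le_normalizer_of_iterated_commutator hD1 hD n hn) ih

end IteratedCommutator

end Subgroup

end

open Subgroup in
/-- Every element of `A n` is a product of an element of `⟨g⟩` and an element of `D n`;
in particular `A n ≤ ⟨g⟩ ⊔ D n`. -/
theorem stmt8 {G : Type*} [Group G] (g : G) (A D : ℕ → Subgroup G)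
    (hA1 : A 1 = nclIn (Subgroup.zpowers g) ⊤)
    (hA : ∀ n ≥ 1, A (n + 1) = nclIn (Subgroup.zpowers g) (A n))
    (hD1 : D 1 = ⁅(⊤ : Subgroup G), Subgroup.zpowers g⁆)
    (hD : ∀ n ≥ 1, D (n + 1) = ⁅D n, Subgroup.zpowers g⁆) :
    ∀ n ≥ 1, (∀ a ∈ A n, ∃ x ∈ Subgroup.zpowers g, ∃ y ∈ D n, a = x * y) ∧
      A n ≤ Subgroup.zpowers g ⊔ D n := by
  intro n hn
  have hle := iterated_nclIn_le_sup_iterated_commutator hA1 hA hD1 hD n hn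
  have hnorm := le_normalizer_of_iterated_commutator hD1 hD n hn
  refine ⟨fun a ha => ?_, hle⟩
  obtain ⟨x, hx, y, hy, rfl⟩ : a ∈ (zpowers g : Set G) * D n := by
    rw [← coe_mul_of_left_le_normalizer_right _ _ hnorm]
    exact hle ha
  exact ⟨x, hx, y, hy, rfl⟩
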